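/- arXiv:2406.03561 — 2 statements merged into one kernel-verified Lean document; each statement's English description precedes it below -/
import Mathlib

section
/- For any graph G, E(G) ≥ 2μ(G), where μ(G) is the matching number of G. -/
open Finset Matrix

noncomputable section

variable {V : Type*} [Fintype V] [DecidableEq V]

/-- The adjacency matrix of a simple graph is Hermitian (over ℝ). -/
theorem SimpleGraph.isHermitian_adjMatrix' (G : SimpleGraph V) [DecidableRel G.Adj] :
    (G.adjMatrix ℝ).IsHermitian := by
  rw [Matrix.IsHermitian, Matrix.conjTranspose_eq_transpose_of_trivial]
  exact G.isSymm_adjMatrix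

/-- The energy of a graph: the sum of the absolute values of the
eigenvalues of its adjacency matrix. -/
def SimpleGraph.energy (G : SimpleGraph V) [DecidableRel G.Adj] : ℝ :=
  ∑ k, |G.isHermitian_adjMatrix'.eigenvalues k|

/-- The Randić index of a graph: the sum over the (unordered) edges `(i,j)`
of `1/√(deg i · deg j)`. -/
def SimpleGraph.randic (G : SimpleGraph V) [DecidableRel G.Adj] : ℝ :=
  ∑ e ∈ G.edgeFinset,
    Sym2.lift ⟨fun i j => 1 / Real.sqrt (G.degree i * G.degree j),
      fun i j => by simp [mul_comm]⟩ e

end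

/-!
Let `B` be the adjacency matrix of a matching `M`, viewed as a spanning subgraph of `G`, and `A`
that of `G`. Since `M ≤ G`, `tr (A B) = ∑ᵥ deg_M v = 2 |M|`. Expanding `A` in an orthonormal
eigenbasis `(vₖ)` gives `tr (A B) = ∑ₖ λₖ ⟪vₖ, B vₖ⟫`, and every row of `B` has at most one
entry `1`, so `|⟪x, B x⟫| ≤ ‖x‖²`. Hence `2 |M| ≤ ∑ₖ |λₖ| = E(G)`.
-/

namespace Matrix

variable {n : Type*} [Fintype n]

theorem trace_eq_sum_dotProduct_mulVec [DecidableEq n]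
    (b : OrthonormalBasis n ℝ (EuclideanSpace ℝ n)) (M : Matrix n n ℝ) : M.trace = ∑ k, b k ⬝ᵥ M *ᵥ b k := by
  rw [← Matrix.trace_toLin_eq M (PiLp.basisFun 2 ℝ n), ← toLpLin_eq_toLin,
    LinearMap.trace_eq_sum_inner _ b]
  refine sum_congr rfl fun k _ => ?_
  simp [EuclideanSpace.inner_eq_star_dotProduct, toLpLin_apply, dotProduct_comm]

theorem IsHermitian.trace_mul_eq_sum_eigenvalues_mul [DecidableEq n] {A : Matrix n n ℝ}
    (hA : A.IsHermitian) (B : Matrix n n ℝ) :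
    (A * B).trace = ∑ k, hA.eigenvalues k *
      (hA.eigenvectorBasis k ⬝ᵥ B *ᵥ hA.eigenvectorBasis k) := by
  rw [trace_mul_comm, trace_eq_sum_dotProduct_mulVec hA.eigenvectorBasis]
  refine sum_congr rfl fun k _ => ?_
  rw [← mulVec_mulVec, hA.mulVec_eigenvectorBasis, mulVec_smul, dotProduct_smul, smul_eq_mul]

theorem abs_dotProduct_mulVec_le_of_sum_abs_le_one {B : Matrix n n ℝ} (hB : B.IsSymm)
    (hrow : ∀ i, ∑ j, |B i j| ≤ 1) (x : n → ℝ) : |x ⬝ᵥ B *ᵥ x| ≤ x ⬝ᵥ x := by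
  have hsym : ∀ i j, B i j = B j i := fun i j => hB.apply j i
  calc |x ⬝ᵥ B *ᵥ x| ≤ ∑ i, ∑ j, |B i j| * |x i| * |x j| := by
        simp only [dotProduct, mulVec, mul_sum]
        refine (abs_sum_le_sum_abs _ _).trans (sum_le_sum fun i _ => ?_)
        refine (abs_sum_le_sum_abs _ _).trans_eq (sum_congr rfl fun j _ => ?_)
        rw [abs_mul, abs_mul]; ring
    _ ≤ ∑ i, ∑ j, (|B i j| * x i ^ 2 + |B j i| * x j ^ 2) / 2 := by
        gcongr with i _ j _
        rw [hsym j i]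
        nlinarith [abs_nonneg (B i j), two_mul_le_add_sq |x i| |x j|, sq_abs (x i), sq_abs (x j)]
    _ = ∑ i, (∑ j, |B i j|) * x i ^ 2 := by
        simp only [add_div, sum_add_distrib, sum_mul]
        rw [sum_comm (f := fun i j => |B j i| * x j ^ 2 / 2), ← sum_add_distrib]
        refine sum_congr rfl fun i _ => ?_
        rw [← sum_add_distrib]; exact sum_congr rfl fun j _ => by ring
    _ ≤ ∑ i, 1 * x i ^ 2 := by gcongr with i _; exact hrow i
    _ = x ⬝ᵥ x := by simp [dotProduct, sq]

theorem IsHermitian.trace_mul_le_sum_abs_eigenvalues [DecidableEq n] {A B : Matrix n n ℝ}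
    (hA : A.IsHermitian) (hB : ∀ x, |x ⬝ᵥ B *ᵥ x| ≤ x ⬝ᵥ x) :
    (A * B).trace ≤ ∑ k, |hA.eigenvalues k| := by
  rw [hA.trace_mul_eq_sum_eigenvalues_mul]
  refine sum_le_sum fun k _ => ?_
  have hunit : (hA.eigenvectorBasis k : n → ℝ) ⬝ᵥ hA.eigenvectorBasis k = 1 := by
    have h := real_inner_self_eq_norm_sq (hA.eigenvectorBasis k)
    rw [hA.eigenvectorBasis.orthonormal.1 k, EuclideanSpace.inner_eq_star_dotProduct] at h
    simpa using h
  calc _ ≤ |hA.eigenvalues k| * |hA.eigenvectorBasis k ⬝ᵥ B *ᵥ hA.eigenvectorBasis k| :=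
        (le_abs_self _).trans (abs_mul _ _).le
    _ ≤ |hA.eigenvalues k| * 1 := by gcongr; exact hunit ▸ hB _
    _ = _ := mul_one _

end Matrix

namespace SimpleGraph

variable {V : Type*} [Fintype V]

theorem trace_adjMatrix_mul_adjMatrix_of_le {α : Type*} [NonAssocSemiring α] [DecidableEq V]
    {G H : SimpleGraph V} [DecidableRel G.Adj] [DecidableRel H.Adj] (h : H ≤ G) :
    (G.adjMatrix α * H.adjMatrix α).trace = 2 * #H.edgeFinset := by
  have hdiag (v : V) : (G.adjMatrix α * H.adjMatrix α) v v = H.degree v := by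
    rw [mul_adjMatrix_apply, ← card_neighborFinset_eq_degree, ← nsmul_one, ← sum_const]
    refine sum_congr rfl fun u hu => ?_
    rw [adjMatrix_apply, if_pos (h ((mem_neighborFinset H v u).1 hu))]
  simp only [trace, Matrix.diag_apply, hdiag]
  rw [← Nat.cast_sum, sum_degrees_eq_twice_card_edges]
  push_cast; rfl

theorem abs_dotProduct_adjMatrix_mulVec_le (H : SimpleGraph V) [DecidableRel H.Adj]
    (hdeg : ∀ v, H.degree v ≤ 1) (x : V → ℝ) :
    |x ⬝ᵥ H.adjMatrix ℝ *ᵥ x| ≤ x ⬝ᵥ x := by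
  refine abs_dotProduct_mulVec_le_of_sum_abs_le_one H.isSymm_adjMatrix (fun v => ?_) x
  have hnonneg (w : V) : 0 ≤ H.adjMatrix ℝ v w := by
    rw [adjMatrix_apply]; split_ifs <;> norm_num
  simp_rw [abs_of_nonneg (hnonneg _)]
  have hsum : ∑ w, H.adjMatrix ℝ v w = H.degree v := by
    simp [← card_neighborFinset_eq_degree, neighborFinset_eq_filter]
  exact hsum ▸ Nat.cast_le_one.2 (hdeg v)

theorem Subgraph.IsMatching.degree_spanningCoe_le_one {G : SimpleGraph V} {M : G.Subgraph}
    (hM : M.IsMatching) [DecidableRel M.spanningCoe.Adj] (v : V) :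
    M.spanningCoe.degree v ≤ 1 := by
  rw [← card_neighborFinset_eq_degree]
  refine card_le_one.2 fun u hu w hw => ?_
  simp only [mem_neighborFinset] at hu hw
  exact hM.eq_of_adj_left hu hw

end SimpleGraph

/-- For any graph `G`, `E(G) ≥ 2 μ(G)` where `μ(G)` is the matching number: for any
matching `M` in `G`, the energy is at least twice the number of edges of `M`. -/
theorem stmt8 {V : Type*} [Fintype V] [DecidableEq V]
    (G : SimpleGraph V) [DecidableRel G.Adj]
    (M : G.Subgraph) (hM : M.IsMatching) :
    2 * (M.edgeSet.ncard : ℝ) ≤ G.energy := by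
  classical
  calc 2 * (M.edgeSet.ncard : ℝ)
      = (G.adjMatrix ℝ * M.spanningCoe.adjMatrix ℝ).trace := by
        rw [SimpleGraph.trace_adjMatrix_mul_adjMatrix_of_le M.spanningCoe_le,
          ← M.edgeSet_spanningCoe, Set.ncard_eq_toFinset_card', Set.toFinset_card,
          SimpleGraph.edgeFinset_card]
    _ ≤ G.energy := G.isHermitian_adjMatrix'.trace_mul_le_sum_abs_eigenvalues
        (M.spanningCoe.abs_dotProduct_adjMatrix_mulVec_le hM.degree_spanningCoe_le_one)
end

section
/- If a graph G on an even number n of vertices has a Hamiltonian path, then E(G) ≥ n. -/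
open Finset Matrix

/-! A Hamiltonian path `v₀ v₁ … v_{n-1}` with `n` even yields the permutation `σ` swapping
`v_{2i}` and `v_{2i+1}`, so that `v ~ σ v` for every vertex `v`. Then
`n = ∑ᵥ A v (σ v) = ∑ₖ λₖ ⟪xₖ, xₖ ∘ σ⟫` for an orthonormal eigenbasis `(xₖ)` of the adjacency
matrix `A`, and each `|⟪xₖ, xₖ ∘ σ⟫| ≤ ‖xₖ‖² = 1` by Cauchy–Schwarz, whence `n ≤ ∑ₖ |λₖ|`. -/

lemma abs_sum_mul_comp_perm_le_sum_sq {ι : Type*} [Fintype ι] (x : ι → ℝ) (σ : Equiv.Perm ι) :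
    |∑ i, x i * x (σ i)| ≤ ∑ i, x i ^ 2 := by
  have hσ : ∑ i, x (σ i) ^ 2 = ∑ i, x i ^ 2 := Equiv.sum_comp σ (fun i => x i ^ 2)
  have hcs := sum_mul_sq_le_sq_mul_sq univ x (x ∘ σ)
  simp only [Function.comp_apply, hσ, ← sq] at hcs
  exact abs_le_of_sq_le_sq' hcs (by positivity) |> abs_le.mpr

namespace Matrix.IsHermitian

variable {n : Type*} [Fintype n] [DecidableEq n] {A : Matrix n n ℝ} (hA : A.IsHermitian)

lemma apply_eq_sum_eigenvalues_mul (i j : n) :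
    A i j = ∑ k, hA.eigenvalues k * hA.eigenvectorBasis k i * hA.eigenvectorBasis k j := by
  conv_lhs => rw [hA.spectral_theorem, Unitary.conjStarAlgAut_apply]
  rw [mul_apply]
  refine sum_congr rfl fun k _ => ?_
  simp only [mul_diagonal, star_apply, eigenvectorUnitary_apply, Function.comp_apply,
    RCLike.ofReal_real_eq_id, id, star_trivial]
  ring

lemma sum_eigenvectorBasis_sq (k : n) : ∑ i, hA.eigenvectorBasis k i ^ 2 = 1 := by
  rw [← EuclideanSpace.real_norm_sq_eq, OrthonormalBasis.norm_eq_one, one_pow]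

lemma sum_apply_perm_le_sum_abs_eigenvalues (σ : Equiv.Perm n) :
    ∑ i, A i (σ i) ≤ ∑ k, |hA.eigenvalues k| := by
  set b := hA.eigenvectorBasis
  calc ∑ i, A i (σ i)
      = ∑ k, hA.eigenvalues k * ∑ i, b k i * b k (σ i) := by
        simp_rw [hA.apply_eq_sum_eigenvalues_mul, mul_sum, mul_assoc]
        exact sum_comm
    _ ≤ ∑ k, |hA.eigenvalues k| * |∑ i, b k i * b k (σ i)| :=
        sum_le_sum fun k _ => (le_abs_self _).trans (abs_mul _ _).le
    _ ≤ ∑ k, |hA.eigenvalues k| := by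
        refine sum_le_sum fun k _ => mul_le_of_le_one_right (abs_nonneg _) ?_
        rw [← hA.sum_eigenvectorBasis_sq k]
        exact abs_sum_mul_comp_perm_le_sum_sq (b k ·) σ

end Matrix.IsHermitian

namespace SimpleGraph

theorem card_le_energy_of_forall_adj_perm {V : Type*} [Fintype V] [DecidableEq V]
    (G : SimpleGraph V) [DecidableRel G.Adj] (σ : Equiv.Perm V) (h : ∀ v, G.Adj v (σ v)) :
    (Fintype.card V : ℝ) ≤ G.energy := by
  have hsum : ∑ v, G.adjMatrix ℝ v (σ v) = Fintype.card V := by simp [h]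
  exact hsum ▸ G.isHermitian_adjMatrix'.sum_apply_perm_le_sum_abs_eigenvalues σ

end SimpleGraph

namespace SimpleGraph.Walk

variable {α : Type*} [Fintype α] [DecidableEq α] {G : SimpleGraph α} {a b : α}

theorem IsHamiltonian.exists_perm_forall_adj {p : G.Walk a b} (hp : p.IsHamiltonian)
    (hcard : Even (Fintype.card α)) : ∃ σ : Equiv.Perm α, ∀ v, G.Adj v (σ v) := by
  obtain ⟨m, hm⟩ := hcard
  have hlen : m * 2 = p.support.length := by rw [hp.length_support]; omega
  let e : Fin m × Fin 2 ≃ α := finProdFinEquiv.trans ((finCongr hlen).trans hp.getVertEquiv)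
  refine ⟨e.permCongr ((Equiv.refl _).prodCongr Fin.revPerm), fun v => ?_⟩
  obtain ⟨⟨i, j⟩, rfl⟩ := e.surjective v
  have hstep : G.Adj (p.getVert (2 * i)) (p.getVert (2 * i + 1)) :=
    p.adj_getVert_succ (by have := hp.length_eq; omega)
  rw [Equiv.permCongr_apply, e.symm_apply_apply]
  fin_cases j
  · simpa [e, finProdFinEquiv, add_comm] using hstep
  · simpa [e, finProdFinEquiv, add_comm] using hstep.symm

end SimpleGraph.Walk

/-- If a graph `G` on an even number `n` of vertices has a Hamiltonian path, then
`E(G) ≥ n`. -/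
theorem stmt11 {n : ℕ} (hn : Even n)
    (G : SimpleGraph (Fin n)) [DecidableRel G.Adj]
    (u v : Fin n) (w : G.Walk u v) (hw : w.IsHamiltonian) :
    (n : ℝ) ≤ G.energy := by
  obtain ⟨σ, hσ⟩ := hw.exists_perm_forall_adj (by rwa [Fintype.card_fin])
  simpa using G.card_le_energy_of_forall_adj_perm σ hσ
end
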